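/- There exists a finite sequential game with acyclic preferences possessing a terminal profile of the {I,A}-dynamics that is not a Nash Equilibrium. -/

import Mathlib

namespace SeqGame

inductive GameTree (N O : Type) : Type where
  | leaf (o : O) : GameTree N O
  | node (i : N) (children : List (GameTree N O)) : GameTree N O

namespace GameTree

variable {N O : Type}

/-- The subtree of `T` at position `p` (a list of child indices), if it exists. -/
def subtree : GameTree N O → List ℕ → Option (GameTree N O)
  | t, [] => some t
  | leaf _, _ :: _ => none
  | node _ c, k :: p =>
    match getElem? c k with
    | some t => subtree t p
    | none => none

/-- A strategy profile: a choice of a child index at every position. -/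
abbrev Profile := List ℕ → ℕ

/-- A profile is legal if it chooses an existing child at every internal node. -/
def Legal (T : GameTree N O) (s : Profile) : Prop :=
  ∀ p i c, T.subtree p = some (node i c) → s p < c.length

/-- The profiles `s` and `s'` differ at the (valid, internal) node `p`. -/
def Differs (T : GameTree N O) (s s' : Profile) (p : List ℕ) : Prop :=
  (∃ i c, T.subtree p = some (node i c)) ∧ s p ≠ s' p

/-- The outcome reached when playing according to the profile `s`. -/
def outcome : GameTree N O → Profile → Option O
  | leaf o, _ => some o
  | node _ c, s =>
    match h : getElem? c (s []) with
    | some t => outcome t (fun p => s (s [] :: p))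
    | none => none
decreasing_by
  have hm : t ∈ c := by
    exact List.mem_of_getElem? h
  have := List.sizeOf_lt_of_mem hm
  simp only [node.sizeOf_spec]
  omega

/-- The profile `s` re-rooted at position `p`. -/
def shift (s : Profile) (p : List ℕ) : Profile := fun q => s (p ++ q)

/-- The owner of the node at position `p`, if it is internal. -/
def ownerAt (T : GameTree N O) (p : List ℕ) : Option N :=
  match T.subtree p with
  | some (node i _) => some i
  | _ => none

/-- `p` lies along the play induced by `s`. -/
def OnPlay (s : Profile) (p : List ℕ) : Prop :=
  ∀ q k, (q ++ [k]) <+: p → s q = k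

/-- Improvement property: every player who changes strictly improves the outcome. -/
def Iprop (T : GameTree N O) (pref : N → O → O → Prop) (s s' : Profile) : Prop :=
  ∀ p i c, T.subtree p = some (node i c) → s p ≠ s' p →
    ∃ x y, T.outcome s = some x ∧ T.outcome s' = some y ∧ pref i x y

/-- Subgame improvement property. -/
def SIprop (T : GameTree N O) (pref : N → O → O → Prop) (s s' : Profile) : Prop :=
  ∀ p i c, T.subtree p = some (node i c) → s p ≠ s' p →
    ∃ x y, outcome (node i c) (shift s p) = some x ∧
      outcome (node i c) (shift s' p) = some y ∧ pref i x y

/-- Laziness property: all changed nodes lie along the play induced by `s'`. -/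
def Lprop (T : GameTree N O) (s s' : Profile) : Prop :=
  ∀ p, Differs T s s' p → OnPlay s' p

/-- One player property: at most one player changes his strategy. -/
def P1prop (T : GameTree N O) (s s' : Profile) : Prop :=
  ∃ i : N, ∀ p, Differs T s s' p → T.ownerAt p = some i

/-- Atomicity property: at most one node changes. -/
def Aprop (T : GameTree N O) (s s' : Profile) : Prop :=
  ∀ p q, Differs T s s' p → Differs T s s' q → p = q

/-- Names of the update properties. -/
inductive Upd : Type | I | SI | L | P1 | A
deriving DecidableEq

/-- Interpretation of an update property name. -/
def holds (T : GameTree N O) (pref : N → O → O → Prop) : Upd → Profile → Profile → Prop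
  | .I => Iprop T pref
  | .SI => SIprop T pref
  | .L => Lprop T
  | .P1 => P1prop T
  | .A => Aprop T

/-- The X-dynamics: an actual update (between legal profiles) satisfying
all properties in `X`. -/
def XDyn (X : Set Upd) (T : GameTree N O) (pref : N → O → O → Prop)
    (s s' : Profile) : Prop :=
  Legal T s ∧ Legal T s' ∧ (∃ p, Differs T s s' p) ∧ ∀ u ∈ X, holds T pref u s s'

/-- A dynamics terminates iff there is no infinite update sequence. -/
def Terminates (D : Profile → Profile → Prop) : Prop :=
  ¬ ∃ f : ℕ → Profile, ∀ n, D (f n) (f (n + 1))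

/-- `s'` is a deviation from `s` by the coalition `I`. -/
def Deviation (T : GameTree N O) (I : Set N) (s s' : Profile) : Prop :=
  Legal T s' ∧ ∀ p i c, T.subtree p = some (node i c) → i ∉ I → s p = s' p

/-- Nash equilibrium. -/
def IsNE (T : GameTree N O) (pref : N → O → O → Prop) (s : Profile) : Prop :=
  ∀ i s', Deviation T {i} s s' →
    ∀ x y, T.outcome s = some x → T.outcome s' = some y → ¬ pref i x y

/-- Subgame perfect equilibrium: an NE in every subgame. -/
def IsSPE (T : GameTree N O) (pref : N → O → O → Prop) (s : Profile) : Prop :=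
  ∀ p t, T.subtree p = some t → IsNE t pref (shift s p)

/-- Strong Nash equilibrium (Aumann). -/
def IsSNE (T : GameTree N O) (pref : N → O → O → Prop) (s : Profile) : Prop :=
  ∀ I : Set N, I.Nonempty → ∀ s', Deviation T I s s' →
    ∃ i ∈ I, ∀ x y, T.outcome s = some x → T.outcome s' = some y → ¬ pref i x y

/-- A relation is acyclic if it has no cycle. -/
def Acyclic (r : O → O → Prop) : Prop := ∀ x, ¬ Relation.TransGen r x x

/-- Incomparability. -/
def Incomp (r : O → O → Prop) (x y : O) : Prop := ¬ r x y ∧ ¬ r y x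

/-- Strict weak order: irreflexive, transitive, with transitive incomparability. -/
def IsSWO (r : O → O → Prop) : Prop :=
  (∀ x, ¬ r x x) ∧ (∀ x y z, r x y → r y z → r x z) ∧
    (∀ x y z, Incomp r x y → Incomp r y z → Incomp r x z)

/-- Strict linear order: irreflexive, transitive and total. -/
def IsSLO (r : O → O → Prop) : Prop :=
  (∀ x, ¬ r x x) ∧ (∀ x y z, r x y → r y z → r x z) ∧
    (∀ x y, x ≠ y → r x y ∨ r y x)

/-- Absence of the main pattern. -/
def OutOfMainPattern (pref : N → O → O → Prop) : Prop :=
  ∀ (i j : N) (x y z : O),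
    ¬ (pref i x y ∧ pref i y z ∧ pref j y z ∧ pref j z x)

/-- Absence of the secondary pattern. -/
def OutOfSecondaryPattern (pref : N → O → O → Prop) : Prop :=
  ∀ (i j : N) (w x y z : O),
    ¬ (pref i w x ∧ pref i x y ∧ pref i y z ∧
       Incomp (pref j) x z ∧ pref j z w ∧ Incomp (pref j) w y)

/-- Absence of both patterns. -/
def OutOfPattern (pref : N → O → O → Prop) : Prop :=
  OutOfMainPattern pref ∧ OutOfSecondaryPattern pref

/-- The preferences can be layered: there is an ordered partition of the
outcomes (given by a layer-index function) such that higher layers are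
unanimously weakly preferred, and within a layer no two players agree on
one pair while disagreeing on another pair. -/
def CanBeLayered (pref : N → O → O → Prop) : Prop :=
  ∃ ℓ : O → ℕ,
    (∀ x y, ℓ x < ℓ y → ∀ i, ¬ pref i y x) ∧
    (∀ (i j : N) (w x y z : O), ℓ w = ℓ x → ℓ x = ℓ y → ℓ y = ℓ z →
      ¬ (pref i x y ∧ pref j x y ∧ pref i w z ∧ pref j z w))

end GameTree
end SeqGame

/-! Playing left at both nodes yields `x`. A change of a single node either moves the root to
the right, reaching `y ≺ x`, or changes the inner node, which is off the play and leaves the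
outcome `x`; neither is a strict improvement, so the profile is terminal for the
{I,A}-dynamics. Yet switching both nodes together reaches `z ≻ x`, a profitable deviation. -/

namespace SeqGame.GameTree

variable {N O : Type}

theorem acyclic_lt [Preorder O] : Acyclic (fun a b : O => a < b) := fun x h =>
  lt_irrefl x (by rwa [Relation.transGen_eq_self] at h)

theorem outcome_node {i : N} {c : List (GameTree N O)} {s : Profile} {k : ℕ}
    {t : GameTree N O} (hk : s [] = k) (ht : getElem? c k = some t) :
    outcome (node i c) s = outcome t (shift s [k]) := by
  subst hk
  rw [outcome]
  split
  · simp_all only [Option.some.injEq]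
    rfl
  · simp_all

theorem Iprop.pref_of_outcome_eq {T : GameTree N O} {pref : N → O → O → Prop}
    {s s' : Profile} (hI : Iprop T pref s s') {p : List ℕ} {i : N} {c : List (GameTree N O)}
    (hp : T.subtree p = some (node i c)) (hne : s p ≠ s' p) {a b : O}
    (ha : T.outcome s = some a) (hb : T.outcome s' = some b) : pref i a b := by
  obtain ⟨a', b', ha', hb', h⟩ := hI p i c hp hne
  rw [ha, Option.some_inj] at ha'
  rw [hb, Option.some_inj] at hb'
  rwa [ha', hb']

theorem deviation_of_subsingleton [Subsingleton N] {T : GameTree N O} {s s' : Profile}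
    (i : N) (h : Legal T s') : Deviation T {i} s s' :=
  ⟨h, fun _ j _ _ hj => absurd (Subsingleton.elim j i) hj⟩

theorem Aprop.eq_of_differs {T : GameTree N O} {s s' : Profile} (hA : Aprop T s s')
    {p q : List ℕ} (hp : Differs T s s' p) {i : N} {c : List (GameTree N O)}
    (hq : T.subtree q = some (node i c)) (hqp : q ≠ p) : s q = s' q := by
  by_contra hne
  exact hqp (hA q p ⟨⟨i, c, hq⟩, hne⟩ hp)

def twoStep (x y z : O) : GameTree Unit O := node () [leaf x, node () [leaf y, leaf z]]

variable {x y z : O}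

theorem twoStep_subtree_eq_node {p : List ℕ} {i : Unit} {c : List (GameTree Unit O)}
    (h : (twoStep x y z).subtree p = some (node i c)) :
    (p = [] ∧ c = [leaf x, node () [leaf y, leaf z]]) ∨ (p = [1] ∧ c = [leaf y, leaf z]) := by
  rcases p with _ | ⟨_ | _ | k, _ | ⟨_ | _ | k', q⟩⟩ <;>
    simp_all [subtree, twoStep] <;> rcases q <;> simp [subtree] at h

theorem legal_twoStep {s : Profile} (h0 : s [] < 2) (h1 : s [1] < 2) :
    Legal (twoStep x y z) s := by
  intro p i c h
  rcases twoStep_subtree_eq_node h with ⟨rfl, rfl⟩ | ⟨rfl, rfl⟩ <;> assumption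

theorem twoStep_outcome_of_left {s : Profile} (h0 : s [] = 0) :
    (twoStep x y z).outcome s = some x := by
  rw [twoStep, outcome_node h0 rfl, outcome]

theorem twoStep_outcome_of_right_left {s : Profile} (h0 : s [] = 1) (h1 : s [1] = 0) :
    (twoStep x y z).outcome s = some y := by
  rw [twoStep, outcome_node h0 rfl, outcome_node h1 rfl, outcome]

theorem twoStep_outcome_of_right_right {s : Profile} (h0 : s [] = 1) (h1 : s [1] = 1) :
    (twoStep x y z).outcome s = some z := by
  rw [twoStep, outcome_node h0 rfl, outcome_node h1 rfl, outcome]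

theorem twoStep_subtree_one : (twoStep x y z).subtree [1] = some (node () [leaf y, leaf z]) :=
  rfl

theorem twoStep_allLeft_terminal {r : O → O → Prop} (hxy : ¬ r x y) (hxx : ¬ r x x)
    (s' : Profile) : ¬ XDyn {Upd.I, Upd.A} (twoStep x y z) (fun _ => r) (fun _ => 0) s' := by
  rintro ⟨-, hs', ⟨p, hp⟩, hX⟩
  have hI : Iprop _ _ (fun _ => 0) s' := hX .I (by simp)
  have hA : Aprop _ (fun _ => 0) s' := hX .A (by simp)
  obtain ⟨⟨i, c, hsub⟩, hne⟩ := hp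
  rcases twoStep_subtree_eq_node hsub with ⟨rfl, rfl⟩ | ⟨rfl, rfl⟩
  · have h0 : s' [] = 1 := by
      have := hs' [] _ _ hsub
      simp only [List.length_cons, List.length_nil] at this hne
      omega
    have h1 : s' [1] = 0 := (hA.eq_of_differs ⟨⟨i, _, hsub⟩, hne⟩ twoStep_subtree_one
      (List.cons_ne_nil _ _)).symm
    exact hxy (hI.pref_of_outcome_eq hsub hne (twoStep_outcome_of_left rfl)
      (twoStep_outcome_of_right_left h0 h1))
  · have h0 : s' [] = 0 := (hA.eq_of_differs ⟨⟨i, _, hsub⟩, hne⟩ rfl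
      (List.cons_ne_nil _ _).symm).symm
    exact hxx (hI.pref_of_outcome_eq hsub hne (twoStep_outcome_of_left rfl)
      (twoStep_outcome_of_left h0))

theorem twoStep_allLeft_not_isNE {r : O → O → Prop} (hxz : r x z) :
    ¬ IsNE (twoStep x y z) (fun _ => r) (fun _ => 0) := fun hNE =>
  hNE () (fun _ => 1) (deviation_of_subsingleton () (legal_twoStep one_lt_two one_lt_two)) x z
    (twoStep_outcome_of_left rfl) (twoStep_outcome_of_right_right rfl rfl) hxz

end SeqGame.GameTree

open SeqGame GameTree in
/-- There is a finite sequential game with acyclic preferences having a terminal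
profile of the {I,A}-dynamics which is not a Nash equilibrium. -/
theorem stmt_9 :
    ∃ (N O : Type) (T : GameTree N O) (pref : N → O → O → Prop) (s : Profile),
      (∀ i, Acyclic (pref i)) ∧ Legal T s ∧
      (∀ s', ¬ XDyn {Upd.I, Upd.A} T pref s s') ∧ ¬ IsNE T pref s :=
  ⟨Unit, ℕ, twoStep 1 0 2, fun _ => (· < ·), fun _ => 0, fun _ => acyclic_lt,
    legal_twoStep two_pos two_pos, twoStep_allLeft_terminal (by decide) (lt_irrefl 1),
    twoStep_allLeft_not_isNE one_lt_two⟩
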